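/- arXiv:0708.3727 — 2 statements merged into one kernel-verified Lean document; each statement's English description precedes it below -/
import Mathlib

section
/- Let F be a finitely generated free pro-p group, R a closed normal subgroup, N = R/closure([R,R]) with filtration N_k = image of R ∩ γ_k(F) in N. Then the intersection ⋂_{k≥1} N_k is trivial. -/
/-!
Let `y ∈ R` map into every `N_k`. Then the coset `y · closure [R, R]` meets every closed term
`γ_k(F)`, so by compactness it meets `⋂ γ_k(F)`. That intersection is trivial: an element
`x ≠ 1` of a profinite group survives in some finite continuous quotient, which is a `p`-group
and hence nilpotent, so `x ∉ γ_k(F)` for large `k`. Thus `y ∈ closure [R, R]`.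
-/

set_option linter.unusedSectionVars false

open scoped BigOperators

section ContCohomology

variable (G : Type*) [Group G] [TopologicalSpace G]
variable (M : Type*) [AddCommGroup M] [TopologicalSpace M] [IsTopologicalAddGroup M]

/-- The differential on inhomogeneous cochains of a topological group `G` with
coefficients in a topological abelian group `M`, for the action `ρ`. -/
def ccd (ρ : G →* Multiplicative (AddAut M)) (n : ℕ) : ((Fin n → G) → M) →+ ((Fin (n + 1) → G) → M) where
  toFun f := fun g =>
    Multiplicative.toAdd (ρ (g 0)) (f fun i => g i.succ) +
      ∑ j : Fin (n + 1), ((-1 : ℤ) ^ ((j : ℕ) + 1)) • f (Fin.contractNth j (· * ·) g)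
  map_zero' := by
    funext g
    simp
  map_add' f₁ f₂ := by
    funext g
    simp only [Pi.add_apply, map_add, smul_add, Finset.sum_add_distrib]
    abel

/-- Continuous cochains. -/
def contCochain (n : ℕ) : AddSubgroup ((Fin n → G) → M) where
  carrier := {f | Continuous f}
  zero_mem' := continuous_const
  add_mem' hf hg := hf.add hg
  neg_mem' hf := hf.neg

/-- Continuous cocycles. -/
def contCocycle (ρ : G →* Multiplicative (AddAut M)) (n : ℕ) : AddSubgroup ((Fin n → G) → M) :=
  contCochain G M n ⊓ (ccd G M ρ n).ker

/-- Continuous coboundaries. -/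
def contCoboundary (ρ : G →* Multiplicative (AddAut M)) : (n : ℕ) → AddSubgroup ((Fin n → G) → M)
  | 0 => ⊥
  | (n + 1) => (contCochain G M n).map (ccd G M ρ n)

/-- Continuous group cohomology of a topological group with coefficients in a topological
abelian group, via inhomogeneous continuous cochains. -/
def Hcont (ρ : G →* Multiplicative (AddAut M)) (n : ℕ) : Type _ :=
  contCocycle G M ρ n ⧸ (contCoboundary G M ρ n).addSubgroupOf (contCocycle G M ρ n)

noncomputable instance (ρ : G →* Multiplicative (AddAut M)) (n : ℕ) : AddCommGroup (Hcont G M ρ n) :=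
  QuotientAddGroup.Quotient.addCommGroup _

end ContCohomology

section Restriction

variable {K G : Type*} [Group K] [Group G] [TopologicalSpace K] [TopologicalSpace G]
variable (M : Type*) [AddCommGroup M] [TopologicalSpace M] [IsTopologicalAddGroup M]

/-- Restriction of cochains along a group homomorphism. -/
def resCochain (φ : K →* G) (n : ℕ) : ((Fin n → G) → M) →+ ((Fin n → K) → M) where
  toFun f := fun g => f (φ ∘ g)
  map_zero' := rfl
  map_add' _ _ := rfl

lemma comp_contractNth (φ : K →* G) {n : ℕ} (j : Fin (n + 1)) (g : Fin (n + 1) → K) :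
    (φ ∘ Fin.contractNth j (· * ·) g) = Fin.contractNth j (· * ·) (φ ∘ g) := by
  funext i
  simp only [Function.comp_apply, Fin.contractNth]
  split_ifs <;> simp

lemma resCochain_comm_ccd (φ : K →* G) (n : ℕ) (f : (Fin n → G) → M) :
    resCochain M φ (n + 1) (ccd G M 1 n f) = ccd K M 1 n (resCochain M φ n f) := by
  funext g
  simp only [resCochain, ccd, AddMonoidHom.coe_mk, ZeroHom.coe_mk, MonoidHom.one_apply,
    toAdd_one, AddAut.zero_apply]
  congr 1
  refine Finset.sum_congr rfl fun j _ => ?_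
  rw [comp_contractNth]

lemma resCochain_continuous (φ : K →* G) (hφ : Continuous φ) (n : ℕ)
    (f : (Fin n → G) → M) (hf : Continuous f) : Continuous (resCochain M φ n f) :=
  hf.comp (continuous_pi fun i => hφ.comp (continuous_apply i))

/-- Restriction on cocycles. -/
def resCocycle (φ : K →* G) (hφ : Continuous φ) (n : ℕ) :
    contCocycle G M 1 n →+ contCocycle K M 1 n :=
  AddMonoidHom.codRestrict ((resCochain M φ n).comp (contCocycle G M 1 n).subtype) _
    (by
      rintro ⟨f, hf⟩
      simp only [contCocycle, AddSubgroup.mem_inf] at hf ⊢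
      obtain ⟨hf1, hf2⟩ := hf
      constructor
      · exact resCochain_continuous M φ hφ n f hf1
      · rw [AddMonoidHom.mem_ker] at hf2 ⊢
        show ccd K M 1 n (resCochain M φ n f) = 0
        rw [← resCochain_comm_ccd M φ n f, hf2]
        rfl)

/-- The canonical map on continuous group cohomology (with trivial coefficients) induced
by a continuous group homomorphism. -/
def Hres (φ : K →* G) (hφ : Continuous φ) (n : ℕ) : Hcont G M 1 n →+ Hcont K M 1 n :=
  QuotientAddGroup.map _ _ (resCocycle M φ hφ n)
    (by
      intro x hx
      rw [AddSubgroup.mem_comap, AddSubgroup.mem_addSubgroupOf]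
      rw [AddSubgroup.mem_addSubgroupOf] at hx
      cases n with
      | zero =>
        simp only [contCoboundary, AddSubgroup.mem_bot] at hx ⊢
        show resCochain M φ 0 (x : (Fin 0 → G) → M) = 0
        rw [hx]
        exact map_zero _
      | succ n =>
        obtain ⟨u, hu, hux⟩ := hx
        refine ⟨resCochain M φ n u, resCochain_continuous M φ hφ n u hu, ?_⟩
        show ccd K M 1 n (resCochain M φ n u) = _
        rw [← resCochain_comm_ccd M φ n u, hux]
        rfl)

end Restriction

section Discrete

variable (G : Type*) [Group G]
variable (M : Type*) [AddCommGroup M] [TopologicalSpace M] [IsTopologicalAddGroup M]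

/-- Ordinary group cohomology of a discrete group, as continuous cohomology for the
bottom (discrete) topology. -/
abbrev Hdisc (n : ℕ) : Type _ := @Hcont G _ ⊥ M _ _ _ 1 n

/-- The comparison map from the continuous cohomology of a topological group `Ghat` to
the ordinary cohomology of a (discrete) group `G`, induced by `φ : G →* Ghat`. -/
def HcompMap (Ghat : Type*) [Group Ghat] [TopologicalSpace Ghat] (φ : G →* Ghat) (n : ℕ) :
    Hcont Ghat M 1 n →+ Hdisc G M n :=
  @Hres G Ghat _ _ ⊥ _ M _ _ _ φ continuous_bot n

end Discrete

section ProP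

/-- A pro-`p` group: a compact, Hausdorff, totally disconnected topological group all of whose
finite continuous quotients are `p`-groups. -/
structure IsProPGroup (p : ℕ) (G : Type*) [Group G] [TopologicalSpace G] : Prop where
  compact : CompactSpace G
  t2 : T2Space G
  td : TotallyDisconnectedSpace G
  topGrp : IsTopologicalGroup G
  proP : ∀ (P : Type) [Group P] [Finite P] (ψ : G →* P),
    (∀ s : Set P, IsOpen (ψ ⁻¹' s)) → Function.Surjective ψ → IsPGroup p P

/-- `φ : G →* Ghat` exhibits the topological group `Ghat` as the pro-`p` completion of the
discrete group `G`: `Ghat` is a pro-`p` group, `φ` has dense image, and every homomorphism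
from `G` to a finite `p`-group factors uniquely through a continuous homomorphism on `Ghat`. -/
structure IsProPCompletion (p : ℕ) {G : Type*} [Group G] {Ghat : Type*} [Group Ghat]
    [TopologicalSpace Ghat] (φ : G →* Ghat) : Prop where
  compact : CompactSpace Ghat
  t2 : T2Space Ghat
  td : TotallyDisconnectedSpace Ghat
  topGrp : IsTopologicalGroup Ghat
  dense : DenseRange φ
  proP : ∀ (P : Type) [Group P] [Finite P] (ψ : Ghat →* P),
    (∀ s : Set P, IsOpen (ψ ⁻¹' s)) → Function.Surjective ψ → IsPGroup p P
  lift : ∀ (P : Type) [Group P] [Finite P], IsPGroup p P → ∀ f : G →* P,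
    ∃! g : Ghat →* P, (∀ s : Set P, IsOpen (g ⁻¹' s)) ∧ g.comp φ = f

/-- Additive version of `IsProPCompletion`. -/
structure IsProPCompletionAdd (p : ℕ) {G : Type*} [AddGroup G] {Ghat : Type*} [AddGroup Ghat]
    [TopologicalSpace Ghat] (φ : G →+ Ghat) : Prop where
  compact : CompactSpace Ghat
  t2 : T2Space Ghat
  td : TotallyDisconnectedSpace Ghat
  topGrp : IsTopologicalAddGroup Ghat
  dense : DenseRange φ
  proP : ∀ (P : Type) [AddGroup P] [Finite P] (ψ : Ghat →+ P),
    (∀ s : Set P, IsOpen (ψ ⁻¹' s)) → Function.Surjective ψ → IsPGroup p (Multiplicative P)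
  lift : ∀ (P : Type) [AddGroup P] [Finite P], IsPGroup p (Multiplicative P) → ∀ f : G →+ P,
    ∃! g : Ghat →+ P, (∀ s : Set P, IsOpen (g ⁻¹' s)) ∧ g.comp φ = f

/-- A free pro-`p` group: the pro-`p` completion of a free group. -/
def IsFreeProPGroup (p : ℕ) (F : Type*) [Group F] [TopologicalSpace F] : Prop :=
  ∃ (X : Type) (φ : FreeGroup X →* F), IsProPCompletion p φ

/-- The lower central series of a topological group, defined with closures:
`gammaHat F 0 = F` and `gammaHat F (k+1)` is the closure of `[gammaHat F k, F]`.
(Indexing: `gammaHat F k` is `γ_{k+1}` of the paper.) -/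
def gammaHat (F : Type*) [Group F] [TopologicalSpace F] [IsTopologicalGroup F] :
    ℕ → Subgroup F
  | 0 => ⊤
  | (k + 1) => Subgroup.topologicalClosure ⁅gammaHat F k, (⊤ : Subgroup F)⁆

end ProP

section ZModTop

instance (n : ℕ) : TopologicalSpace (ZMod n) := ⊥
instance (n : ℕ) : DiscreteTopology (ZMod n) := ⟨rfl⟩
instance (n : ℕ) : IsTopologicalAddGroup (ZMod n) where
  continuous_add := continuous_of_discreteTopology
  continuous_neg := continuous_of_discreteTopology

end ZModTop

section GammaHat

variable {F : Type*} [Group F] [TopologicalSpace F] [IsTopologicalGroup F]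

instance gammaHat_normal (k : ℕ) : (gammaHat F k).Normal := by
  induction k with
  | zero => exact Subgroup.normal_top
  | succ k ih => exact Subgroup.is_normal_topologicalClosure _

lemma isClosed_gammaHat (k : ℕ) : IsClosed (gammaHat F k : Set F) := by
  cases k with
  | zero => exact isClosed_univ
  | succ k => exact Subgroup.isClosed_topologicalClosure _

lemma gammaHat_antitone : Antitone (gammaHat F) :=
  antitone_nat_of_succ_le fun k =>
    Subgroup.topologicalClosure_minimal _ (Subgroup.commutator_le_left _ _) (isClosed_gammaHat k)

lemma map_gammaHat_le_lowerCentralSeries {P : Type*} [Group P] [TopologicalSpace P]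
    [DiscreteTopology P] {ψ : F →* P} (hψ : Continuous ψ) (k : ℕ) :
    (gammaHat F k).map ψ ≤ (⊤ : Subgroup P).lowerCentralSeries k := by
  induction k with
  | zero => exact le_top
  | succ k ih =>
    rw [Subgroup.map_le_iff_le_comap]
    refine Subgroup.topologicalClosure_minimal _ ?_
      ((isClosed_discrete (((⊤ : Subgroup P).lowerCentralSeries (k + 1) : Set P))).preimage hψ)
    rw [← Subgroup.map_le_iff_le_comap, Subgroup.map_commutator]
    exact Subgroup.commutator_mono ih le_top

/-- A clopen neighbourhood of `1` missing `x` contains an open normal subgroup `H`, and the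
nilpotent quotient by `H` kills `gammaHat F k` for large `k`. -/
theorem iInf_gammaHat_eq_bot [CompactSpace F] [T2Space F] [TotallyDisconnectedSpace F]
    (hnil : ∀ H : OpenNormalSubgroup F, Group.IsNilpotent (F ⧸ H.toSubgroup)) :
    ⨅ k, gammaHat F k = ⊥ := by
  refine eq_bot_iff.2 fun x hx => Subgroup.mem_bot.2 ?_
  by_contra hx1
  obtain ⟨W, hW, h1W, hxW⟩ := exists_isClopen_of_totally_separated (Ne.symm hx1)
  obtain ⟨H, hHW⟩ := IsTopologicalGroup.exist_openNormalSubgroup_sub_clopen_nhds_of_one hW h1W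
  obtain ⟨n, hn⟩ := Subgroup.nilpotent_iff_lowerCentralSeries.1 (hnil H)
  have := QuotientGroup.discreteTopology H.isOpen
  have hxn : (x : F ⧸ H.toSubgroup) ∈ (⊤ : Subgroup _).lowerCentralSeries n :=
    map_gammaHat_le_lowerCentralSeries (ψ := QuotientGroup.mk' H.toSubgroup)
      QuotientGroup.continuous_mk n ⟨x, Subgroup.mem_iInf.1 hx n, rfl⟩
  rw [hn, Subgroup.mem_bot, QuotientGroup.eq_one_iff] at hxn
  exact hxW (hHW hxn)

end GammaHat

lemma IsProPCompletion.isProPGroup {p : ℕ} {G : Type*} [Group G] {Ghat : Type*} [Group Ghat]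
    [TopologicalSpace Ghat] {φ : G →* Ghat} (h : IsProPCompletion p φ) : IsProPGroup p Ghat :=
  ⟨h.compact, h.t2, h.td, h.topGrp, h.proP⟩

namespace IsProPGroup

variable {p : ℕ} [Fact p.Prime] {F : Type} [Group F] [TopologicalSpace F] [IsTopologicalGroup F]

lemma isNilpotent_quotient (hF : IsProPGroup p F) (H : OpenNormalSubgroup F) :
    Group.IsNilpotent (F ⧸ H.toSubgroup) :=
  have := hF.compact
  have := QuotientGroup.discreteTopology H.isOpen
  have := Subgroup.quotient_finite_of_isOpen _ H.isOpen
  (hF.proP _ (QuotientGroup.mk' H.toSubgroup)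
    (fun s => (isOpen_discrete s).preimage QuotientGroup.continuous_mk)
    (QuotientGroup.mk'_surjective _)).isNilpotent

lemma iInf_gammaHat_eq_bot (hF : IsProPGroup p F) : ⨅ k, gammaHat F k = ⊥ :=
  have := hF.compact
  have := hF.t2
  have := hF.td
  _root_.iInf_gammaHat_eq_bot hF.isNilpotent_quotient

end IsProPGroup

open scoped Pointwise in
/-- The nonempty compact sets `Γ k ∩ y C⁻¹` have a common point, which must be `1`. -/
lemma mem_of_forall_mem_mul_of_iInf_eq_bot {G : Type*} [Group G] [TopologicalSpace G]
    [IsTopologicalGroup G] [CompactSpace G] {C : Set G} (hC : IsClosed C) {Γ : ℕ → Subgroup G}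
    (hΓ : Antitone Γ) (hΓC : ∀ k, IsClosed (Γ k : Set G)) (hbot : ⨅ k, Γ k = ⊥) {y : G}
    (hy : ∀ k, y ∈ (Γ k : Set G) * C) : y ∈ C := by
  set A : ℕ → Set G := fun k => (Γ k : Set G) ∩ (fun z => z⁻¹ * y) ⁻¹' C
  have hA : ∀ k, IsClosed (A k) := fun k =>
    (hΓC k).inter (hC.preimage (continuous_inv.mul continuous_const))
  have hAne : ∀ k, (A k).Nonempty := fun k => by
    obtain ⟨z, hz, c, hc, rfl⟩ := Set.mem_mul.1 (hy k)
    exact ⟨z, hz, by simpa using hc⟩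
  obtain ⟨z, hz⟩ := IsCompact.nonempty_iInter_of_sequence_nonempty_isCompact_isClosed A
    (fun k => Set.inter_subset_inter_left _ (hΓ k.le_succ)) hAne (hA 0).isCompact hA
  rw [Set.mem_iInter] at hz
  have hz1 : z = 1 := by
    rw [← Subgroup.mem_bot, ← hbot, Subgroup.mem_iInf]
    exact fun k => (hz k).1
  simpa [hz1] using (hz 0).2

section Statement6

variable {F : Type} [Group F] [TopologicalSpace F] [IsTopologicalGroup F]

instance (R : Subgroup F) [R.Normal] : (Subgroup.topologicalClosure ⁅R, R⁆).Normal :=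
  Subgroup.is_normal_topologicalClosure _

instance (R : Subgroup F) [R.Normal] :
    ((Subgroup.topologicalClosure ⁅R, R⁆).subgroupOf R).Normal :=
  Subgroup.Normal.subgroupOf inferInstance R

theorem statement6_general (p : ℕ) [Fact p.Prime] (d : ℕ)
    (φ : FreeGroup (Fin d) →* F) (h : IsProPCompletion p φ)
    (R : Subgroup F) [R.Normal] :
    (⨅ k : ℕ,
      Subgroup.map (QuotientGroup.mk' ((Subgroup.topologicalClosure ⁅R, R⁆).subgroupOf R))
        ((R ⊓ gammaHat F k).subgroupOf R)) = ⊥ := by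
  have hF := h.isProPGroup
  have := hF.compact
  refine eq_bot_iff.2 fun x hx => ?_
  obtain ⟨y, -, rfl⟩ := Subgroup.mem_map.1 (Subgroup.mem_iInf.1 hx 0)
  rw [Subgroup.mem_bot, QuotientGroup.mk'_apply, QuotientGroup.eq_one_iff,
    Subgroup.mem_subgroupOf]
  refine mem_of_forall_mem_mul_of_iInf_eq_bot (Subgroup.isClosed_topologicalClosure _)
    gammaHat_antitone isClosed_gammaHat hF.iInf_gammaHat_eq_bot fun k => ?_
  obtain ⟨z, hz, hmk⟩ := Subgroup.mem_map.1 (Subgroup.mem_iInf.1 hx k)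
  have hzy : z⁻¹ * y ∈ (Subgroup.topologicalClosure ⁅R, R⁆).subgroupOf R :=
    QuotientGroup.eq.1 hmk
  exact Set.mem_mul.2 ⟨z, (Subgroup.mem_subgroupOf.1 hz).2, _, hzy, by simp⟩

/-- Let `F` be a finitely generated free pro-`p` group, `R` a closed normal
subgroup, `N = R/closure [R,R]` with filtration `N_k` given by the images of `R ∩ γ_k(F)`.
Then `⋂_{k ≥ 1} N_k` is trivial.  (Here `gammaHat F k = γ_{k+1}(F)`.) -/
theorem statement6 (p : ℕ) [Fact p.Prime] (d : ℕ)
    (φ : FreeGroup (Fin d) →* F) (h : IsProPCompletion p φ)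
    (R : Subgroup F) [R.Normal] (hRclosed : IsClosed (R : Set F)) :
    (⨅ k : ℕ,
      Subgroup.map (QuotientGroup.mk' ((Subgroup.topologicalClosure ⁅R, R⁆).subgroupOf R))
        ((R ⊓ gammaHat F k).subgroupOf R)) = ⊥ :=
  statement6_general p d φ h R

end Statement6
end

section
/- Let G be a discrete group with a finite 2-dimensional classifying space, presented as G = F/R with F free of rank d and R normally generated by r relators coming from the classifying 2-complex. Then the relation module N = R/[R,R] is a free ℤ[G]-module, freely generated by the images of the r relators. -/
/-!
Statement 14: for a group `G` with a finite aspherical 2-dimensional classifying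
(presentation) complex, the relation module `N = R/[R,R]` is a free `ℤ[G]`-module on the
images of the relators.  The classifying 2-complex is encoded by the exactness of the
cellular chain complex `0 → ℤ[G]^r → ℤ[G]^d → ℤ[G] → ℤ → 0` of its universal cover, whose
second differential is given by the Fox derivatives of the relators.
-/

noncomputable section

namespace Statement14

variable {d : ℕ} {G : Type} [Group G] (ρ : FreeGroup (Fin d) →* G)

/-- The conjugation action of the free group on the abelianized kernel (relation module),
as a homomorphism to additive automorphisms (written as `ℤ`-linear equivalences). -/
def conjRep : FreeGroup (Fin d) →*
    (Additive (Abelianization ρ.ker) ≃ₗ[ℤ] Additive (Abelianization ρ.ker)) where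
  toFun f :=
    (MulEquiv.toAdditive
      { toFun := Abelianization.map (MulAut.conjNormal f).toMonoidHom
        invFun := Abelianization.map (MulAut.conjNormal f⁻¹).toMonoidHom
        left_inv := fun a => by
          rw [Abelianization.map_map_apply]
          rw [show (MulAut.conjNormal (G := FreeGroup (Fin d)) (H := ρ.ker)
              f⁻¹).toMonoidHom.comp (MulAut.conjNormal f).toMonoidHom = MonoidHom.id _ by
            ext x
            simp]
          simp
        right_inv := fun a => by
          rw [Abelianization.map_map_apply]
          rw [show (MulAut.conjNormal (G := FreeGroup (Fin d)) (H := ρ.ker)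
              f).toMonoidHom.comp (MulAut.conjNormal f⁻¹).toMonoidHom = MonoidHom.id _ by
            ext x
            simp]
          simp
        map_mul' := map_mul _ }).toIntLinearEquiv
  map_one' := by
    apply LinearEquiv.toLinearMap_injective
    apply LinearMap.ext
    rintro a
    show (Abelianization.map (MulAut.conjNormal (1 : FreeGroup (Fin d))).toMonoidHom) _ = _
    rw [show (MulAut.conjNormal (G := FreeGroup (Fin d))
        (H := ρ.ker) (1 : FreeGroup (Fin d))).toMonoidHom = MonoidHom.id _ by ext x; simp]
    simp
    rfl
  map_mul' f g := by
    apply LinearEquiv.toLinearMap_injective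
    apply LinearMap.ext
    rintro a
    show (Abelianization.map _) _ = (Abelianization.map _) ((Abelianization.map _) _)
    rw [Abelianization.map_map_apply]
    congr 1
    ext x
    simp [mul_assoc]

/-- The representation of `G` on the relation module `R/[R,R]`, obtained by descending the
conjugation action of the free group along `ρ`. -/
def relationRep (hρ : Function.Surjective ρ) :
    Representation ℤ G (Additive (Abelianization ρ.ker)) :=
  { toFun := fun g =>
      (QuotientGroup.lift ρ.ker (conjRep ρ)
        (by
          intro f hf
          apply LinearEquiv.toLinearMap_injective
          apply LinearMap.ext
          rintro a
          induction a using Quotient.inductionOn with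
          | h x =>
            show (Abelianization.map (MulAut.conjNormal f).toMonoidHom)
              (Abelianization.of x) = Abelianization.of x
            rw [Abelianization.map_of]
            simp only [MulEquiv.coe_toMonoidHom]
            have : (MulAut.conjNormal f) x = (⟨f, hf⟩ : ρ.ker) * x * (⟨f, hf⟩ : ρ.ker)⁻¹ := by
              ext
              simp [MulAut.conjNormal]
              rfl
            rw [this]
            simp [mul_comm, mul_assoc])
        ((QuotientGroup.quotientKerEquivOfSurjective ρ hρ).symm g)).toLinearMap
    map_one' := by
      simp only [map_one]
      rfl
    map_mul' := fun g h => by simp }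

variable (G) in
/-- The first differential `ℤ[G]^d → ℤ[G]` of the cellular chain complex of the universal
cover of the presentation complex, `e_j ↦ 1 - x_j`. -/
def d1Map (xg : Fin d → G) :
    (Fin d → MonoidAlgebra ℤ G) →ₗ[MonoidAlgebra ℤ G] MonoidAlgebra ℤ G where
  toFun v := ∑ j, v j * (1 - MonoidAlgebra.single (xg j) 1)
  map_add' a b := by simp [add_mul, Finset.sum_add_distrib]
  map_smul' m a := by
    simp only [Pi.smul_apply, smul_eq_mul, RingHom.id_apply, Finset.mul_sum, mul_assoc]

/-- The augmentation `ℤ[G] → ℤ`. -/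
def aug : MonoidAlgebra ℤ G →+* ℤ :=
  ((MonoidAlgebra.lift ℤ ℤ G) 1).toRingHom

end Statement14

/-!
Sending the `i`-th basis vector of `ℤ[G]^r` to the class of the relator `w i` defines a
`ℤ[G]`-linear map `φ : ℤ[G]^r → N`, where `ρ f` acts on `N` by conjugation with `f`. It is onto
because `R` is the normal closure of the relators. The Fox cocycle `c` restricts to a
homomorphism on `R`, which kills `[R, R]` and is `G`-equivariant, so it induces a `ℤ[G]`-linear
`θ : N → ℤ[G]^d` with `θ ∘ φ = ∂₂`. Asphericity, i.e. injectivity of `∂₂`, makes `φ` injective.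
-/

section CrossedHom

variable {F G k M : Type*} [Group F] [Group G] [Semiring k] [AddCommGroup M]
  [Module (MonoidAlgebra k G) M] {ρ : F →* G} {c : F → M}

theorem crossedHom_one
    (hc : ∀ u v, c (u * v) = c u + MonoidAlgebra.single (ρ u) (1 : k) • c v) : c 1 = 0 := by
  simpa [← MonoidAlgebra.one_def] using hc 1 1

theorem crossedHom_mul_of_mem_ker
    (hc : ∀ u v, c (u * v) = c u + MonoidAlgebra.single (ρ u) (1 : k) • c v)
    {x : F} (hx : x ∈ ρ.ker) (y : F) : c (x * y) = c x + c y := by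
  rw [hc, ρ.mem_ker.mp hx, ← MonoidAlgebra.one_def, one_smul]

theorem crossedHom_conj_of_mem_ker
    (hc : ∀ u v, c (u * v) = c u + MonoidAlgebra.single (ρ u) (1 : k) • c v)
    (f : F) {x : F} (hx : x ∈ ρ.ker) :
    c (f * x * f⁻¹) = MonoidAlgebra.single (ρ f) (1 : k) • c x := by
  have hinv : c f + MonoidAlgebra.single (ρ f) (1 : k) • c f⁻¹ = 0 := by
    rw [← hc, mul_inv_cancel, crossedHom_one hc]
  rw [mul_assoc, hc, crossedHom_mul_of_mem_ker hc hx, smul_add, ← add_assoc, add_right_comm,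
    hinv, zero_add]

end CrossedHom

namespace Statement14

variable {d : ℕ} {G : Type} [Group G] (ρ : FreeGroup (Fin d) →* G)

section RelationModule

variable (hρ : Function.Surjective ρ)

def relationClass (x : ρ.ker) : (relationRep ρ hρ).asModule :=
  Additive.ofMul (Abelianization.of x)

theorem relationRep_apply_relationClass (f : FreeGroup (Fin d)) (x : ρ.ker) :
    relationRep ρ hρ (ρ f) (relationClass ρ hρ x) =
      relationClass ρ hρ ⟨f * x * f⁻¹, ρ.normal_ker.conj_mem _ x.2 f⟩ := by
  have hmk : (QuotientGroup.quotientKerEquivOfSurjective ρ hρ).symm (ρ f) = f := by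
    rw [MulEquiv.symm_apply_eq]; rfl
  simp only [relationRep, MonoidHom.coe_mk, OneHom.coe_mk, hmk]
  show Additive.ofMul
    (Abelianization.map (MulAut.conjNormal f).toMonoidHom (Abelianization.of x)) = _
  rw [Abelianization.map_of]
  rfl

theorem single_one_smul_relationClass (f : FreeGroup (Fin d)) (x : ρ.ker) :
    MonoidAlgebra.single (ρ f) (1 : ℤ) • relationClass ρ hρ x =
      relationClass ρ hρ ⟨f * x * f⁻¹, ρ.normal_ker.conj_mem _ x.2 f⟩ := by
  rw [Representation.single_smul, one_smul]
  exact relationRep_apply_relationClass ρ hρ f x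

theorem span_range_relationClass_eq_top {ι : Type*} (w : ι → ρ.ker)
    (hw : Subgroup.normalClosure (Set.range fun i => (w i : FreeGroup (Fin d))) = ρ.ker) :
    Submodule.span (MonoidAlgebra ℤ G) (Set.range (relationClass ρ hρ ∘ w)) = ⊤ := by
  set P := Submodule.span (MonoidAlgebra ℤ G) (Set.range (relationClass ρ hρ ∘ w))
  let K : Subgroup ρ.ker := (AddSubgroup.toSubgroup P.toAddSubgroup).comap
    (Abelianization.of : ρ.ker →* Multiplicative (relationRep ρ hρ).asModule)
  have hK : Subgroup.normalClosure (Set.range fun i => (w i : FreeGroup (Fin d))) ≤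
      K.map ρ.ker.subtype := by
    rw [Subgroup.normalClosure, Subgroup.closure_le]
    intro _ hy
    obtain ⟨_, ⟨i, rfl⟩, hconj⟩ := Group.mem_conjugatesOfSet_iff.mp hy
    obtain ⟨f, rfl⟩ := isConj_iff.mp hconj
    refine ⟨⟨_, ρ.normal_ker.conj_mem _ (w i).2 f⟩, ?_, rfl⟩
    show relationClass ρ hρ _ ∈ P
    rw [← single_one_smul_relationClass]
    exact P.smul_mem _ (Submodule.subset_span ⟨i, rfl⟩)
  refine Submodule.eq_top_iff'.mpr fun n => ?_
  obtain ⟨x, rfl⟩ := QuotientGroup.mk_surjective n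
  obtain ⟨y, hy, hyx⟩ := hK (hw.ge x.2)
  rwa [Subtype.ext hyx] at hy

variable {M : Type*} [AddCommGroup M] [Module (MonoidAlgebra ℤ G) M]
  (c : FreeGroup (Fin d) → M)
  (hc : ∀ u v, c (u * v) = c u + MonoidAlgebra.single (ρ u) (1 : ℤ) • c v)

def foxHom : Additive (Abelianization ρ.ker) →+ M :=
  MonoidHom.toAdditiveLeft <| Abelianization.lift
    { toFun := fun x => Multiplicative.ofAdd (c x)
      map_one' := congrArg Multiplicative.ofAdd (crossedHom_one hc)
      map_mul' := fun x y =>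
        congrArg Multiplicative.ofAdd (crossedHom_mul_of_mem_ker hc x.2 y) }

theorem foxHom_relationRep (f : FreeGroup (Fin d)) (n : Additive (Abelianization ρ.ker)) :
    foxHom ρ c hc (relationRep ρ hρ (ρ f) n) =
      MonoidAlgebra.single (ρ f) (1 : ℤ) • foxHom ρ c hc n := by
  obtain ⟨x, rfl⟩ := QuotientGroup.mk_surjective n
  exact (congrArg (foxHom ρ c hc) (relationRep_apply_relationClass ρ hρ f x)).trans
    (crossedHom_conj_of_mem_ker hc f x.2)

def foxMap : (relationRep ρ hρ).asModule →ₗ[MonoidAlgebra ℤ G] M where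
  toFun n := foxHom ρ c hc ((relationRep ρ hρ).asModuleEquiv n)
  map_add' := by simp
  map_smul' a n := by
    induction a using MonoidAlgebra.induction_linear with
    | zero => simp
    | add a b ha hb => simp_all [add_smul]
    | single g z =>
      obtain ⟨f, rfl⟩ := hρ g
      have hz : MonoidAlgebra.single (ρ f) z = z • MonoidAlgebra.single (ρ f) (1 : ℤ) := by
        rw [MonoidAlgebra.smul_single', mul_one]
      rw [RingHom.id_apply, Representation.asModuleEquiv_map_smul,
        Representation.asAlgebraHom_single, LinearMap.smul_apply, map_zsmul,
        foxHom_relationRep ρ hρ c hc f, hz, smul_assoc]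

theorem foxMap_relationClass (x : ρ.ker) :
    foxMap ρ hρ c hc (relationClass ρ hρ x) = c x :=
  rfl

end RelationModule

theorem statement14 (r : ℕ) (hρ : Function.Surjective ρ)
    (w : Fin r → FreeGroup (Fin d))
    (hw : Subgroup.normalClosure (Set.range w) = ρ.ker)
    -- the Fox derivative cocycle of the presentation:
    (c : FreeGroup (Fin d) → (Fin d → MonoidAlgebra ℤ G))
    (hc_cocycle : ∀ u v : FreeGroup (Fin d),
      c (u * v) = c u + MonoidAlgebra.single (ρ u) (1 : ℤ) • c v)
    -- the second differential of the cellular chain complex, `e_i ↦ ∂(w_i)`: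
    (d2 : (Fin r → MonoidAlgebra ℤ G) →ₗ[MonoidAlgebra ℤ G] (Fin d → MonoidAlgebra ℤ G))
    (hd2 : ∀ i : Fin r, d2 (Pi.single i 1) = c (w i))
    -- exactness of `0 → ℤ[G]^r → ℤ[G]^d → ℤ[G] → ℤ → 0`:
    (hex2 : Function.Injective d2) :
    ∃ b : Module.Basis (Fin r) (MonoidAlgebra ℤ G) (relationRep ρ hρ).asModule,
      ∀ i : Fin r,
        b i = (Additive.ofMul (Abelianization.of
          (⟨w i, hw ▸ Subgroup.subset_normalClosure (Set.mem_range_self i)⟩ : ρ.ker))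
            : (relationRep ρ hρ).asModule) := by
  let v : Fin r → ρ.ker := fun i =>
    ⟨w i, hw ▸ Subgroup.subset_normalClosure (Set.mem_range_self i)⟩
  have hli : LinearIndependent (MonoidAlgebra ℤ G) (relationClass ρ hρ ∘ v) := by
    have hfox : foxMap ρ hρ c hc_cocycle ∘ relationClass ρ hρ ∘ v =
        d2 ∘ Pi.basisFun (MonoidAlgebra ℤ G) (Fin r) := by
      ext1 i
      simp [foxMap_relationClass, hd2, v]
    refine LinearIndependent.of_comp (foxMap ρ hρ c hc_cocycle) ?_
    rw [hfox]
    exact (Pi.basisFun _ (Fin r)).linearIndependent.map_injOn d2 hex2.injOn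
  exact ⟨.mk hli (span_range_relationClass_eq_top ρ hρ v hw).ge, Module.Basis.mk_apply _ _⟩

end Statement14
end
end
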